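/- arXiv:1409.7996 — 2 statements merged into one kernel-verified Lean document; each statement's English description precedes it below -/
import Mathlib

section
/- For a regular dominant weight λ (λ_1 > … > λ_n), each defining inequality A_{i,j} ≥ A_{i+1,j} and A_{i+1,j} ≥ A_{i,j+1} of the Gelfand–Tsetlin polytope GT_λ defines a facet, i.e., no such inequality is implied by the others together with the equations A_{0,j} = λ_j. -/
open scoped BigOperators Classical

/-- Index type for Gelfand–Tsetlin pattern positions: (row, column), 0-based. -/
abbrev GTIdx (n : ℕ) := Fin n × Fin n

/-- A position (i,j) is a valid pattern position iff i + j < n (row i has columns 0..n-1-i). -/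
def GTValid (n : ℕ) (p : GTIdx n) : Prop := (p.1 : ℕ) + (p.2 : ℕ) < n

/-- Entry of a real point at natural-number coordinates (0 outside the index range). -/
noncomputable def entryR {n : ℕ} (A : GTIdx n → ℝ) (i j : ℕ) : ℝ :=
  if h : i < n ∧ j < n then A (⟨i, h.1⟩, ⟨j, h.2⟩) else 0

/-- Entry of an integer point at natural-number coordinates (0 outside the index range). -/
def entryZ {n : ℕ} (A : GTIdx n → ℤ) (i j : ℕ) : ℤ :=
  if h : i < n ∧ j < n then A (⟨i, h.1⟩, ⟨j, h.2⟩) else 0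

/-- The Gelfand–Tsetlin polytope of λ: top row equal to λ, interlacing inequalities,
and (as a normalization embedding it in a finite-dimensional space) zero at invalid positions. -/
def GTPoly (n : ℕ) (lam : Fin n → ℝ) : Set (GTIdx n → ℝ) :=
  {A | (∀ j : Fin n, entryR A 0 j = lam j)
    ∧ (∀ i j : ℕ, i + 1 + j < n →
        entryR A (i+1) j ≤ entryR A i j ∧ entryR A i (j+1) ≤ entryR A (i+1) j)
    ∧ (∀ p : GTIdx n, ¬ GTValid n p → A p = 0)}

/-- Integer Gelfand–Tsetlin patterns with top row λ. -/
def GTPat (n : ℕ) (lam : Fin n → ℤ) : Set (GTIdx n → ℤ) :=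
  {A | (∀ j : Fin n, entryZ A 0 j = lam j)
    ∧ (∀ i j : ℕ, i + 1 + j < n →
        entryZ A (i+1) j ≤ entryZ A i j ∧ entryZ A i (j+1) ≤ entryZ A (i+1) j)
    ∧ (∀ p : GTIdx n, ¬ GTValid n p → A p = 0)}

/-- The weight of a pattern: μ_i = (sum of row i-1) - (sum of row i), 1-based;
here `i : Fin n` is 0-based, so `wtZ A i = (row i sum) - (row (i+1) sum)`. -/
def wtZ {n : ℕ} (A : GTIdx n → ℤ) (i : Fin n) : ℤ :=
  (∑ j : Fin n, entryZ A i j) - ∑ j : Fin n, entryZ A ((i : ℕ) + 1) j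

noncomputable def wtR {n : ℕ} (A : GTIdx n → ℝ) (i : Fin n) : ℝ :=
  (∑ j : Fin n, entryR A i j) - ∑ j : Fin n, entryR A ((i : ℕ) + 1) j

/-- Multiset of entries of row i. -/
noncomputable def rowM {n : ℕ} (A : GTIdx n → ℝ) (i : ℕ) : Multiset ℝ :=
  (Finset.univ.filter (fun j : Fin n => i + (j : ℕ) < n)).val.map (fun j => entryR A i (j : ℕ))

/-- Valid pattern positions (the nodes of the ambient graph T). -/
abbrev GTNode (n : ℕ) := {p : GTIdx n // GTValid n p}

/-- `upEdge n p q` : q is an upper neighbour of p in the triangular graph T,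
i.e. q = (i-1, j) or (i-1, j+1) where p = (i, j). -/
def upEdge (n : ℕ) (p q : GTIdx n) : Prop :=
  GTValid n p ∧ GTValid n q ∧ (q.1 : ℕ) + 1 = (p.1 : ℕ) ∧
    ((q.2 : ℕ) = (p.2 : ℕ) ∨ (q.2 : ℕ) = (p.2 : ℕ) + 1)

/-- The equality graph Γ_v of a point v of the GT polytope: nodes are valid positions,
edges join a position to an upper neighbour carrying an equal entry. -/
def Gamma (n : ℕ) (A : GTIdx n → ℝ) : SimpleGraph (GTNode n) where
  Adj p q := (upEdge n p.1 q.1 ∨ upEdge n q.1 p.1) ∧ A p.1 = A q.1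
  symm := by
    constructor
    rintro p q ⟨h, e⟩
    exact ⟨h.symm, e.symm⟩
  loopless := by
    constructor
    rintro p ⟨h | h, _⟩ <;> exact absurd h.2.2.1 (by omega)

/-- Tangent cone of a convex set P at a point v. -/
def tangentCone {E : Type*} [AddCommGroup E] [Module ℝ E] (P : Set E) (v : E) : Set E :=
  {y | ∃ x ∈ P, ∃ t : ℝ, 0 ≤ t ∧ y = v + t • (x - v)}

/-- The ray from v in direction ε. -/
def raySet {E : Type*} [AddCommGroup E] [Module ℝ E] (v ε : E) : Set E :=
  {y | ∃ t : ℝ, 0 ≤ t ∧ y = v + t • ε}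

/-- ε is the direction of an edge (one-dimensional extreme face) of the cone C with apex v. -/
def IsEdgeDir {E : Type*} [AddCommGroup E] [Module ℝ E] (C : Set E) (v ε : E) : Prop :=
  ε ≠ 0 ∧ IsExtreme ℝ C (raySet v ε)

/-- Direction-vector pattern for edges at a simplicial vertex: all nonzero coordinates lie
in rows a..b, one per row, and all are equal to c. -/
def simpDir (n : ℕ) (a b : ℕ) (c : ℝ) (ε : GTIdx n → ℝ) : Prop :=
  (∀ p : GTIdx n, ε p ≠ 0 → GTValid n p ∧ a ≤ (p.1 : ℕ) ∧ (p.1 : ℕ) ≤ b)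
  ∧ (∀ r : ℕ, a ≤ r → r ≤ b → ∃! p : GTIdx n, (p.1 : ℕ) = r ∧ ε p ≠ 0)
  ∧ (∀ p : GTIdx n, ε p ≠ 0 → ε p = c)

/-- A simplicial vertex: a vertex (extreme point) of the GT polytope whose equality graph
is acyclic. -/
def IsSimpVertex (n : ℕ) (lam : Fin n → ℝ) (A : GTIdx n → ℝ) : Prop :=
  A ∈ Set.extremePoints ℝ (GTPoly n lam) ∧ (Gamma n A).IsAcyclic

/- ### Rational functions, integer-point transforms, and the specialization F -/

/-- Field of rational functions in variables indexed by ι. -/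
abbrev KK (ι : Type) := FractionRing (MvPolynomial ι ℚ)

/-- The monomial t^u, u ∈ ℤ^ι, inside the rational function field. -/
noncomputable def tmon (ι : Type) [Fintype ι] (u : ι → ℤ) : KK ι :=
  ∏ i, (algebraMap (MvPolynomial ι ℚ) (KK ι) (MvPolynomial.X i)) ^ (u i)

/-- Indicator (as coefficient function of a formal Laurent series) of the integer points of S. -/
noncomputable def indSet {ι : Type} (S : Set (ι → ℝ)) : (ι → ℤ) → ℚ :=
  fun a => if (fun i => (a i : ℝ)) ∈ S then 1 else 0

/-- `Represents r f` : the rational function r is the integer-point transform of the formal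
Laurent series with coefficient function f, i.e. there is a nonzero Laurent polynomial q such
that q·f is a (finitely supported) Laurent polynomial g and r·q = g as rational functions. -/
noncomputable def Represents {ι : Type} [Fintype ι] (r : KK ι) (f : (ι → ℤ) → ℚ) : Prop :=
  ∃ q : (ι → ℤ) →₀ ℚ, q ≠ 0 ∧ ∃ g : (ι → ℤ) →₀ ℚ,
    (∀ a, g a = ∑ b ∈ q.support, q b * f (a - b)) ∧
    r * (∑ b ∈ q.support, (q b : KK ι) * tmon ι b)
      = ∑ a ∈ g.support, (g a : KK ι) * tmon ι a

/-- Field of rational functions in x_1, ..., x_n. -/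
abbrev Kx (n : ℕ) := FractionRing (MvPolynomial (Fin n) ℚ)

/-- The variable x_i. -/
noncomputable def xv (n : ℕ) (i : Fin n) : Kx n :=
  algebraMap (MvPolynomial (Fin n) ℚ) (Kx n) (MvPolynomial.X i)

/-- The substitution underlying F: t_{0,j} ↦ x_1 and t_{i,j} ↦ x_i⁻¹ x_{i+1} for i ≥ 1
(1-based x's; in our 0-based indexing t_{i,·} ↦ x_{i-1}⁻¹ · x_i for i ≥ 1, t_{0,·} ↦ x_0). -/
noncomputable def xsub (n : ℕ) (p : GTIdx n) : Kx n :=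
  if (p.1 : ℕ) = 0 then xv n p.1
  else (xv n (⟨(p.1 : ℕ) - 1, Nat.lt_of_le_of_lt (Nat.sub_le _ _) p.1.isLt⟩ : Fin n))⁻¹ * xv n p.1

/-- The specialization F on Laurent polynomials, as a ring homomorphism. -/
noncomputable def phiF (n : ℕ) : MvPolynomial (GTIdx n) ℚ →+* Kx n :=
  MvPolynomial.eval₂Hom (Rat.castHom (Kx n)) (xsub n)

/-- `FSpec n r y` : the specialization F of the rational function r (in the t-variables)
is defined and equal to y; i.e. r = p/q with F(q) ≠ 0 and y = F(p)/F(q). -/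
noncomputable def FSpec (n : ℕ) (r : KK (GTIdx n)) (y : Kx n) : Prop :=
  ∃ p q : MvPolynomial (GTIdx n) ℚ, phiF n q ≠ 0 ∧
    r * algebraMap (MvPolynomial (GTIdx n) ℚ) (KK (GTIdx n)) q
      = algebraMap (MvPolynomial (GTIdx n) ℚ) (KK (GTIdx n)) p ∧
    y * phiF n q = phiF n p

/-- The monomial e^μ = x^μ for an integral weight μ. -/
noncomputable def emon {n : ℕ} (mu : Fin n → ℤ) : Kx n := ∏ i, xv n i ^ mu i

/-- ρ = (n-1, n-2, ..., 0). -/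
def rhoW (n : ℕ) (i : Fin n) : ℤ := (n : ℤ) - 1 - (i : ℤ)

/-- The Schur (Laurent) polynomial of λ, defined by Weyl's character formula
(bialternant form). -/
noncomputable def schur (n : ℕ) (lam : Fin n → ℤ) : Kx n :=
  (∑ w : Equiv.Perm (Fin n), ((Equiv.Perm.sign w : ℤ) : Kx n)
      * ∏ i, xv n i ^ (lam (w⁻¹ i) + rhoW n (w⁻¹ i)))
  / (∑ w : Equiv.Perm (Fin n), ((Equiv.Perm.sign w : ℤ) : Kx n)
      * ∏ i, xv n i ^ (rhoW n (w⁻¹ i)))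

/-- The summand w(e^λ / Π_{i<j} (1 - x_j/x_i)) of Weyl's character formula. -/
noncomputable def weylTerm (n : ℕ) (lam : Fin n → ℤ) (w : Equiv.Perm (Fin n)) : Kx n :=
  (∏ i, xv n (w i) ^ lam i)
    / ∏ p ∈ Finset.univ.filter (fun p : Fin n × Fin n => p.1 < p.2),
        (1 - xv n (w p.2) / xv n (w p.1))

/-- Integer version of the edge-direction pattern. -/
def simpDirZ (n : ℕ) (a b : ℕ) (c : ℤ) (ε : GTIdx n → ℤ) : Prop :=
  (∀ p : GTIdx n, ε p ≠ 0 → GTValid n p ∧ a ≤ (p.1 : ℕ) ∧ (p.1 : ℕ) ≤ b)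
  ∧ (∀ r : ℕ, a ≤ r → r ≤ b → ∃! p : GTIdx n, (p.1 : ℕ) = r ∧ ε p ≠ 0)
  ∧ (∀ p : GTIdx n, ε p ≠ 0 → ε p = c)

/-- F(t^u): the specialization of the Laurent monomial t^u. -/
noncomputable def Fmon (n : ℕ) (u : GTIdx n → ℤ) : Kx n := ∏ p, xsub n p ^ u p

/-- A rational polytope in ℝ^m: a bounded set cut out by finitely many integral
linear inequalities. -/
def IsRatPolytope (m : ℕ) (P : Set (Fin m → ℝ)) : Prop :=
  Bornology.IsBounded P ∧ ∃ (k : ℕ) (a : Fin k → Fin m → ℤ) (b : Fin k → ℤ),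
    P = {x | ∀ i, ∑ j, (a i j : ℝ) * x j ≤ (b i : ℝ)}

/-- A rational polyhedron in ℝ^m. -/
def IsRatPolyhedron (m : ℕ) (P : Set (Fin m → ℝ)) : Prop :=
  ∃ (k : ℕ) (a : Fin k → Fin m → ℤ) (b : Fin k → ℤ),
    P = {x | ∀ i, ∑ j, (a i j : ℝ) * x j ≤ (b i : ℝ)}

/-- The cone C_Δ attached to a connected component Δ = c of the equality graph Γ_v:
vectors supported on the nodes of Δ, vanishing at the top (row-0) node of Δ, and
satisfying the interlacing inequalities along the edges of Δ. -/
noncomputable def compCone (n : ℕ) (A : GTIdx n → ℝ) (c : (Gamma n A).ConnectedComponent) :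
    Set (GTIdx n → ℝ) :=
  {x | (∀ p : GTIdx n,
          (¬ ∃ hp : GTValid n p, (Gamma n A).connectedComponentMk ⟨p, hp⟩ = c) → x p = 0)
    ∧ (∀ p : GTNode n, (Gamma n A).connectedComponentMk p = c → (p.1.1 : ℕ) = 0 → x p.1 = 0)
    ∧ (∀ p q : GTNode n, (Gamma n A).connectedComponentMk p = c →
        upEdge n p.1 q.1 → A p.1 = A q.1 →
        (((q.1.2 : ℕ) = (p.1.2 : ℕ)) → x p.1 ≤ x q.1) ∧
        (((q.1.2 : ℕ) = (p.1.2 : ℕ) + 1) → x q.1 ≤ x p.1))}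

/-! Let `δ > 0` bound the gaps `λ_c - λ_{c+1}` from below (`δ = 1` for integral `λ`). Each
inequality is violated alone at a perturbation of an interior point of `GT_λ` in which the
targeted inequality has slack `δ / 4` and every other one has slack at least `3δ / 4`: moving the
entry `A_{i+1,j}` by `δ / 2` towards the violation breaks the targeted inequality and no other.
For `A_{i,j} ≥ A_{i+1,j}` the base point is `A_{r,c} = λ_c - δ r / 4`, for
`A_{i+1,j} ≥ A_{i,j+1}` it is `A_{r,c} = λ_{r+c} + δ r / 4`. -/

noncomputable def gtOfFun (n : ℕ) (f : ℕ → ℕ → ℝ) : GTIdx n → ℝ :=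
  fun p => if GTValid n p then f p.1 p.2 else 0

theorem entryR_gtOfFun {n : ℕ} (f : ℕ → ℕ → ℝ) {r c : ℕ} (h : r + c < n) :
    entryR (gtOfFun n f) r c = f r c := by
  have hr : r < n := by omega
  have hc : c < n := by omega
  simp only [entryR, dif_pos (And.intro hr hc), gtOfFun]
  exact if_pos h

theorem gtOfFun_of_not_gtValid {n : ℕ} (f : ℕ → ℕ → ℝ) {p : GTIdx n} (hp : ¬ GTValid n p) :
    gtOfFun n f p = 0 :=
  if_neg hp

def GTIneq (f : ℕ → ℕ → ℝ) (i j : ℕ) (s : Bool) : Prop :=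
  if s then f (i + 1) j ≤ f i j else f i (j + 1) ≤ f (i + 1) j

theorem gtIneq_gtOfFun_iff {n : ℕ} (f : ℕ → ℕ → ℝ) {i j : ℕ} (h : i + 1 + j < n) (s : Bool) :
    (if s then entryR (gtOfFun n f) (i + 1) j ≤ entryR (gtOfFun n f) i j
      else entryR (gtOfFun n f) i (j + 1) ≤ entryR (gtOfFun n f) (i + 1) j) ↔
      GTIneq f i j s := by
  cases s <;>
    simp only [GTIneq, Bool.false_eq_true, if_true, if_false,
      entryR_gtOfFun f h, entryR_gtOfFun f (show i + j < n by omega),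
      entryR_gtOfFun f (show i + (j + 1) < n by omega)]

theorem exists_violating_only_of_fun {n : ℕ} {lam : Fin n → ℝ} (f : ℕ → ℕ → ℝ)
    (hlam : ∀ c : Fin n, f 0 c = lam c) {i j : ℕ} (hij : i + 1 + j < n) {s : Bool}
    (hother : ∀ i' j' : ℕ, i' + 1 + j' < n → ∀ s' : Bool, (i', j', s') ≠ (i, j, s) →
      GTIneq f i' j' s')
    (hviol : ¬ GTIneq f i j s) :
    ∃ A : GTIdx n → ℝ,
      (∀ j' : Fin n, entryR A 0 j' = lam j') ∧
      (∀ p : GTIdx n, ¬ GTValid n p → A p = 0) ∧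
      (∀ i' j' : ℕ, i' + 1 + j' < n → ∀ s' : Bool, (i', j', s') ≠ (i, j, s) →
        if s' then entryR A (i' + 1) j' ≤ entryR A i' j'
        else entryR A i' (j' + 1) ≤ entryR A (i' + 1) j') ∧
      (if s then ¬ (entryR A (i + 1) j ≤ entryR A i j)
       else ¬ (entryR A i (j + 1) ≤ entryR A (i + 1) j)) := by
  refine ⟨gtOfFun n f, fun c => ?_, fun _ => gtOfFun_of_not_gtValid f,
    fun i' j' h s' hne => (gtIneq_gtOfFun_iff f h s').2 (hother i' j' h s' hne), ?_⟩
  · rw [entryR_gtOfFun f (by simp), hlam]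
  · have hviol' := mt (gtIneq_gtOfFun_iff f hij s).1 hviol
    cases s <;> simpa using hviol'

section Perturbation

variable {n : ℕ} {L : ℕ → ℝ} {δ : ℝ} {i j : ℕ}

noncomputable def bump (δ : ℝ) (i j r c : ℕ) : ℝ :=
  if r = i + 1 ∧ c = j then δ / 2 else 0

theorem bump_nonneg (hδ : 0 ≤ δ) (r c : ℕ) : 0 ≤ bump δ i j r c := by
  unfold bump; split_ifs <;> linarith

theorem bump_le (hδ : 0 ≤ δ) (r c : ℕ) : bump δ i j r c ≤ δ / 2 := by
  unfold bump; split_ifs <;> linarith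

theorem bump_self : bump δ i j (i + 1) j = δ / 2 :=
  if_pos ⟨rfl, rfl⟩

theorem bump_of_ne {i' j' : ℕ} (h : (i', j') ≠ (i, j)) : bump δ i j (i' + 1) j' = 0 :=
  if_neg fun ⟨hi, hj⟩ => h (by rw [Nat.succ_injective hi, hj])

theorem bump_row_eq_zero (c : ℕ) : bump δ i j i c = 0 :=
  if_neg fun ⟨hi, _⟩ => Nat.succ_ne_self i hi.symm

noncomputable def columnPoint (L : ℕ → ℝ) (δ : ℝ) (i j r c : ℕ) : ℝ :=
  L c - δ * r / 4 + bump δ i j r c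

noncomputable def diagonalPoint (L : ℕ → ℝ) (δ : ℝ) (i j r c : ℕ) : ℝ :=
  L (r + c) + δ * r / 4 - bump δ i j r c

theorem columnPoint_zero (c : ℕ) : columnPoint L δ i j 0 c = L c := by
  simp [columnPoint, bump]

theorem diagonalPoint_zero (c : ℕ) : diagonalPoint L δ i j 0 c = L c := by
  simp [diagonalPoint, bump]

theorem gtIneq_columnPoint (hL : ∀ k, k + 1 < n → L (k + 1) + δ ≤ L k) (hδ : 0 ≤ δ)
    {i' j' : ℕ} (h : i' + 1 + j' < n) (s' : Bool) (hne : (i', j', s') ≠ (i, j, true)) :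
    GTIneq (columnPoint L δ i j) i' j' s' := by
  have hb := bump_nonneg (i := i) (j := j) hδ
  cases s'
  · have hb' := bump_le (i := i) (j := j) hδ i' (j' + 1)
    have hgap := hL j' (by omega)
    simp only [GTIneq, columnPoint, Bool.false_eq_true, if_false]
    push_cast
    linarith [hb (i' + 1) j']
  · have hne' : (i', j') ≠ (i, j) := fun e => hne (by simp_all)
    simp only [GTIneq, columnPoint, if_true, bump_of_ne hne']
    push_cast
    linarith [hb i' j']

theorem not_gtIneq_columnPoint (hδ : 0 < δ) : ¬ GTIneq (columnPoint L δ i j) i j true := by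
  simp only [GTIneq, columnPoint, if_true, bump_self, bump_row_eq_zero, not_le]
  push_cast
  linarith

theorem gtIneq_diagonalPoint (hL : ∀ k, k + 1 < n → L (k + 1) + δ ≤ L k) (hδ : 0 ≤ δ)
    {i' j' : ℕ} (h : i' + 1 + j' < n) (s' : Bool) (hne : (i', j', s') ≠ (i, j, false)) :
    GTIneq (diagonalPoint L δ i j) i' j' s' := by
  have hb := bump_nonneg (i := i) (j := j) hδ
  have hdiag : i' + (j' + 1) = i' + 1 + j' := by omega
  cases s'
  · have hne' : (i', j') ≠ (i, j) := fun e => hne (by simp_all)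
    simp only [GTIneq, diagonalPoint, Bool.false_eq_true, if_false, bump_of_ne hne', hdiag]
    push_cast
    linarith [hb i' (j' + 1)]
  · have hb' := bump_le (i := i) (j := j) hδ i' j'
    have hgap := hL (i' + j') (by omega)
    simp only [GTIneq, diagonalPoint, if_true, add_right_comm i' 1 j']
    push_cast
    linarith [hb (i' + 1) j']

theorem not_gtIneq_diagonalPoint (hδ : 0 < δ) : ¬ GTIneq (diagonalPoint L δ i j) i j false := by
  simp only [GTIneq, diagonalPoint, Bool.false_eq_true, if_false, bump_self, bump_row_eq_zero,
    not_le, show i + (j + 1) = i + 1 + j by omega]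
  push_cast
  linarith

end Perturbation

theorem exists_extension_of_strictAnti {n : ℕ} {lam : Fin n → ℤ}
    (hreg : ∀ i j : Fin n, i < j → lam j < lam i) :
    ∃ L : ℕ → ℝ, (∀ c : Fin n, L c = lam c) ∧ ∀ k, k + 1 < n → L (k + 1) + 1 ≤ L k := by
  refine ⟨fun k => if h : k < n then (lam ⟨k, h⟩ : ℝ) else 0, fun c => by simp, fun k hk => ?_⟩
  have hlt : lam ⟨k + 1, hk⟩ < lam ⟨k, by omega⟩ := hreg _ _ (Fin.mk_lt_mk.mpr k.lt_succ_self)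
  simp only [dif_pos hk, dif_pos (show k < n by omega)]
  exact_mod_cast Int.add_one_le_of_lt hlt

/-- for regular λ, no defining inequality of GT_λ is implied by the others
together with the equations fixing the top row (each inequality defines a facet).
The Boolean s selects the inequality A_{i,j} ≥ A_{i+1,j} (s = true) or
A_{i+1,j} ≥ A_{i,j+1} (s = false). -/
theorem statement4 (n : ℕ) (lam : Fin n → ℤ)
    (hreg : ∀ i j : Fin n, i < j → lam j < lam i)
    (i j : ℕ) (hij : i + 1 + j < n) (s : Bool) :
    ∃ A : GTIdx n → ℝ,
      (∀ j' : Fin n, entryR A 0 j' = (lam j' : ℝ)) ∧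
      (∀ p : GTIdx n, ¬ GTValid n p → A p = 0) ∧
      (∀ i' j' : ℕ, i' + 1 + j' < n → ∀ s' : Bool, (i', j', s') ≠ (i, j, s) →
        if s' then entryR A (i' + 1) j' ≤ entryR A i' j'
        else entryR A i' (j' + 1) ≤ entryR A (i' + 1) j') ∧
      (if s then ¬ (entryR A (i + 1) j ≤ entryR A i j)
       else ¬ (entryR A i (j + 1) ≤ entryR A (i + 1) j)) := by
  obtain ⟨L, hL0, hL⟩ := exists_extension_of_strictAnti hreg
  cases s
  · exact exists_violating_only_of_fun (diagonalPoint L 1 i j)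
      (fun c => by rw [diagonalPoint_zero, hL0]) hij
      (fun _ _ h => gtIneq_diagonalPoint hL zero_le_one h)
      (not_gtIneq_diagonalPoint one_pos)
  · exact exists_violating_only_of_fun (columnPoint L 1 i j)
      (fun c => by rw [columnPoint_zero, hL0]) hij
      (fun _ _ h => gtIneq_columnPoint hL zero_le_one h)
      (not_gtIneq_columnPoint one_pos)
end

section
/- Let v be a vertex of GT_λ for a regular weight λ, and let Γ_v be the graph on the pattern positions (i,j) whose edges join (i,j) to an upper neighbor (i−1,j) or (i−1,j+1) whenever the corresponding entries of v are equal. Then Γ_v has exactly n connected components, and each connected component contains exactly one node of row 0. -/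
open scoped BigOperators Classical

/-!
Entries of `A` are constant along the components of `Γ_A`, and the row-`0` entries `λ_j` are
pairwise distinct, so the top nodes `(0, j)` lie in pairwise distinct components. Conversely, if
`A` is a vertex, every component meets row `0`: a component avoiding it could be shifted up and
down by a small `δ` without violating any interlacing inequality (both sides of an inequality
inside the component move together, and every inequality across its boundary is strict), which
would exhibit `A` as the midpoint of two points of `GT_λ`. Hence `j ↦ [(0, j)]` is a bijection
from `Fin n` onto the components.
-/

open Filter Topology in
lemma exists_pos_forall_add_lt {ι : Type*} [Finite ι] (f : ι → ℝ) :
    ∃ δ > 0, ∀ i j, f i < f j → f i + δ < f j := by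
  have hsmall : ∀ᶠ δ in 𝓝 (0 : ℝ), ∀ i j, f i < f j → f i + δ < f j := by
    refine eventually_all.2 fun i => eventually_all.2 fun j => ?_
    by_cases hij : f i < f j
    · exact (((continuous_const_add (f i)).tendsto' 0 (f i) (add_zero _)).eventually_lt_const
        hij).mono fun _ h _ => h
    · exact .of_forall fun _ h => absurd h hij
  obtain ⟨δ, hδ, hδpos⟩ :=
    ((hsmall.filter_mono nhdsWithin_le_nhds).and (self_mem_nhdsWithin (s := Set.Ioi 0))).exists
  exact ⟨δ, hδpos, hδ⟩

section GelfandTsetlin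

variable {n : ℕ} {lam : Fin n → ℝ} {A : GTIdx n → ℝ}

lemma entryR_of_lt (A : GTIdx n → ℝ) {i j : ℕ} (hi : i < n) (hj : j < n) :
    entryR A i j = A (⟨i, hi⟩, ⟨j, hj⟩) :=
  dif_pos ⟨hi, hj⟩

lemma Gamma.apply_eq_of_reachable {p q : GTNode n} (h : (Gamma n A).Reachable p q) :
    A p.1 = A q.1 := by
  obtain ⟨w⟩ := h
  induction w with
  | nil => rfl
  | cons hadj _ ih => exact hadj.2.trans ih

section Perturbation

variable {S : Set (GTIdx n)} {d : ℝ}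

lemma add_smul_indicator_apply_le_of_upEdge
    (hS : ∀ p q : GTNode n, (Gamma n A).Adj p q → (p.1 ∈ S ↔ q.1 ∈ S))
    (hd : ∀ u v, A u < A v → A u + |d| < A v) {u v : GTIdx n}
    (huv : upEdge n u v ∨ upEdge n v u) (hle : A u ≤ A v) :
    (A + d • S.indicator 1 : GTIdx n → ℝ) u ≤ (A + d • S.indicator 1 : GTIdx n → ℝ) v := by
  rcases hle.lt_or_eq with hlt | heq
  · have hgap := hd u v hlt
    by_cases hu : u ∈ S <;> by_cases hv : v ∈ S <;> simp [hu, hv] <;>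
      linarith [le_abs_self d, neg_abs_le d]
  · have hvalid : GTValid n u ∧ GTValid n v := by
      rcases huv with h | h
      exacts [⟨h.1, h.2.1⟩, ⟨h.2.1, h.1⟩]
    have hmem := hS ⟨u, hvalid.1⟩ ⟨v, hvalid.2⟩ ⟨huv, heq⟩
    simp [Set.indicator_apply, hmem, heq]

lemma add_smul_indicator_mem_GTPoly (hA : A ∈ GTPoly n lam)
    (hS : ∀ p q : GTNode n, (Gamma n A).Adj p q → (p.1 ∈ S ↔ q.1 ∈ S))
    (hSvalid : ∀ q ∈ S, GTValid n q) (hSrow : ∀ q ∈ S, (q.1 : ℕ) ≠ 0)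
    (hd : ∀ u v, A u < A v → A u + |d| < A v) :
    A + d • S.indicator 1 ∈ GTPoly n lam := by
  obtain ⟨htop, hinter, hzero⟩ := hA
  refine ⟨fun j => ?_, fun i j hij => ?_, fun q hq => ?_⟩
  · have h0 : (⟨0, j.pos⟩, j) ∉ S := fun h => hSrow _ h rfl
    rw [← htop j, entryR_of_lt _ j.pos j.isLt, entryR_of_lt _ j.pos j.isLt]
    simp [h0]
  · have hi : i < n := by omega
    have hi1 : i + 1 < n := by omega
    have hj : j < n := by omega
    have hj1 : j + 1 < n := by omega
    have hlow : GTValid n (⟨i + 1, hi1⟩, ⟨j, hj⟩) := show i + 1 + j < n by omega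
    have hup : upEdge n (⟨i + 1, hi1⟩, ⟨j, hj⟩) (⟨i, hi⟩, ⟨j, hj⟩) :=
      ⟨hlow, show i + j < n by omega, rfl, Or.inl rfl⟩
    have hup' : upEdge n (⟨i + 1, hi1⟩, ⟨j, hj⟩) (⟨i, hi⟩, ⟨j + 1, hj1⟩) :=
      ⟨hlow, show i + (j + 1) < n by omega, rfl, Or.inr rfl⟩
    have hAij := hinter i j hij
    rw [entryR_of_lt _ hi1 hj, entryR_of_lt _ hi hj, entryR_of_lt _ hi hj1] at hAij ⊢
    exact ⟨add_smul_indicator_apply_le_of_upEdge hS hd (Or.inl hup) hAij.1,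
      add_smul_indicator_apply_le_of_upEdge hS hd (Or.inr hup') hAij.2⟩
  · have hqS : q ∉ S := fun h => hq (hSvalid q h)
    simp [hqS, hzero q hq]

end Perturbation

lemma exists_row_zero_mem_supp (hA : A ∈ (GTPoly n lam).extremePoints ℝ)
    (C : (Gamma n A).ConnectedComponent) : ∃ p ∈ C.supp, (p.1.1 : ℕ) = 0 := by
  by_contra! hC
  set S : Set (GTIdx n) := Subtype.val '' C.supp
  have hmemS : ∀ p : GTNode n, p.1 ∈ S ↔ p ∈ C.supp := fun p =>
    Subtype.val_injective.mem_set_image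
  have hS : ∀ p q : GTNode n, (Gamma n A).Adj p q → (p.1 ∈ S ↔ q.1 ∈ S) := fun p q hpq => by
    simp only [hmemS, SimpleGraph.ConnectedComponent.mem_supp_iff,
      SimpleGraph.ConnectedComponent.connectedComponentMk_eq_of_adj hpq]
  have hSvalid : ∀ q ∈ S, GTValid n q := by
    rintro _ ⟨p, -, rfl⟩
    exact p.2
  have hSrow : ∀ q ∈ S, (q.1 : ℕ) ≠ 0 := by
    rintro _ ⟨p, hp, rfl⟩
    exact hC p hp
  obtain ⟨δ, hδ, hgap⟩ := exists_pos_forall_add_lt A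
  have hmem : ∀ d : ℝ, |d| = δ → A + d • S.indicator 1 ∈ GTPoly n lam := fun d hd =>
    add_smul_indicator_mem_GTPoly hA.1 hS hSvalid hSrow (hd ▸ hgap)
  have hsplit := hA.2 (hmem δ (abs_of_pos hδ)) (hmem (-δ) (by simp [abs_of_pos hδ]))
    (by simpa [sub_eq_add_neg] using mem_openSegment_add_sub (𝕜 := ℝ) A (δ • S.indicator 1))
  obtain ⟨p, hp⟩ := C.nonempty_supp
  have hshift := congrFun hsplit p.1
  simp [(hmemS p).2 hp] at hshift
  exact hδ.ne' hshift

def topNode (j : Fin n) : GTNode n :=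
  ⟨(⟨0, j.pos⟩, j), show 0 + (j : ℕ) < n by omega⟩

lemma eq_topNode {p : GTNode n} (hp : (p.1.1 : ℕ) = 0) : p = topNode p.1.2 :=
  Subtype.ext (Prod.ext (Fin.ext hp) rfl)

lemma apply_topNode (hA : A ∈ GTPoly n lam) (j : Fin n) : A (topNode j).1 = lam j := by
  rw [← hA.1 j, entryR_of_lt _ j.pos j.isLt]
  rfl

lemma bijective_connectedComponentMk_topNode (hlam : Function.Injective lam)
    (hA : A ∈ (GTPoly n lam).extremePoints ℝ) :
    Function.Bijective fun j => (Gamma n A).connectedComponentMk (topNode j) := by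
  refine ⟨fun i j hij => hlam ?_, fun C => ?_⟩
  · rw [← apply_topNode hA.1 i, ← apply_topNode hA.1 j]
    exact Gamma.apply_eq_of_reachable (SimpleGraph.ConnectedComponent.exact hij)
  · obtain ⟨p, hp, hp0⟩ := exists_row_zero_mem_supp hA C
    exact ⟨p.1.2, (congrArg _ (eq_topNode hp0)).symm.trans hp⟩

end GelfandTsetlin

/-- for a vertex v of GT_λ (λ regular) the equality graph Γ_v has exactly n
connected components, and each component contains exactly one node of row 0. -/
theorem statement5 (n : ℕ) (lam : Fin n → ℤ)
    (hreg : ∀ i j : Fin n, i < j → lam j < lam i)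
    (A : GTIdx n → ℝ)
    (hA : A ∈ Set.extremePoints ℝ (GTPoly n (fun i => (lam i : ℝ)))) :
    Nat.card (Gamma n A).ConnectedComponent = n ∧
    ∀ c : (Gamma n A).ConnectedComponent,
      ∃! p : GTNode n, ((p.1.1 : ℕ) = 0 ∧ (Gamma n A).connectedComponentMk p = c) := by
  have hbij := bijective_connectedComponentMk_topNode
    (Int.cast_strictMono.comp_strictAnti (show StrictAnti lam from hreg)).injective hA
  refine ⟨(Nat.card_eq_of_bijective _ hbij).symm.trans (Nat.card_fin n), fun c => ?_⟩
  obtain ⟨j, rfl⟩ := hbij.2 c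
  refine ⟨topNode j, ⟨rfl, rfl⟩, fun p ⟨hp0, hp⟩ => ?_⟩
  rw [eq_topNode hp0] at hp ⊢
  rw [hbij.1 hp]
end
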